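/- arXiv:1104.3500 — 2 statements merged into one kernel-verified Lean document; each statement's English description precedes it below -/
import Mathlib

section
/- For every right-infinite binary word x, the word 0μ(μ(x)) = 0μ²(x) is 7/3-power-free if and only if x is 7/3-power-free. -/
/-- Thue–Morse morphism on finite binary words: 0 ↦ 01, 1 ↦ 10 (0 = false, 1 = true). -/
def mu (w : List Bool) : List Bool := w.flatMap (fun b => [b, !b])

/-- Thue–Morse morphism on right-infinite binary words. -/
def muI (x : ℕ → Bool) : ℕ → Bool := fun n => if n % 2 = 0 then x (n / 2) else !(x (n / 2))

/-- Prepend a finite word to an infinite word. -/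
def appendInf (u : List Bool) (x : ℕ → Bool) : ℕ → Bool :=
  fun n => if h : n < u.length then u.get ⟨n, h⟩ else x (n - u.length)

/-- `w` is a prefix of the infinite word `x`. -/
def InfPrefix (w : List Bool) (x : ℕ → Bool) : Prop :=
  ∀ i (h : i < w.length), w.get ⟨i, h⟩ = x i

/-- The finite word `w` is `p`-periodic. -/
def ListPeriodic (w : List Bool) (p : ℕ) : Prop :=
  ∀ i, i + p < w.length → w.getD i false = w.getD (i + p) false

/-- `w` occurs as a factor of the infinite word `x`. -/
def IsFactor (x : ℕ → Bool) (w : List Bool) : Prop :=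
  ∃ i, ∀ k (h : k < w.length), w.get ⟨k, h⟩ = x (i + k)

/-- `w` has exponent ≥ β : it has a period `p ≥ 1` with `|w| ≥ β·p`. -/
def HasExpGE (w : List Bool) (β : ℚ) : Prop :=
  ∃ p, 1 ≤ p ∧ ListPeriodic w p ∧ β * p ≤ (w.length : ℚ)

/-- `w` has exponent > β. -/
def HasExpGT (w : List Bool) (β : ℚ) : Prop :=
  ∃ p, 1 ≤ p ∧ ListPeriodic w p ∧ β * p < (w.length : ℚ)

/-- The infinite word `x` is β-power-free: no factor has exponent ≥ β. -/
def FreeI (x : ℕ → Bool) (β : ℚ) : Prop := ∀ w, IsFactor x w → ¬ HasExpGE w β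

/-- The infinite word `x` is β⁺-power-free: no factor has exponent > β. -/
def FreePlusI (x : ℕ → Bool) (β : ℚ) : Prop := ∀ w, IsFactor x w → ¬ HasExpGT w β

/-- The finite word `x` is β-power-free. -/
def FreeL (x : List Bool) (β : ℚ) : Prop := ∀ w, w <:+: x → ¬ HasExpGE w β

/-- The finite word `x` is β⁺-power-free. -/
def FreeLPlus (x : List Bool) (β : ℚ) : Prop := ∀ w, w <:+: x → ¬ HasExpGT w β

/-- The infinite word `x` is 7/3-power-free. -/
def Free73 (x : ℕ → Bool) : Prop := FreeI x (7/3)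

/-- The prefix of length `n` of the infinite word `x` is `p`-periodic. -/
def PrefPeriodic (x : ℕ → Bool) (p n : ℕ) : Prop := ∀ i, i + p < n → x i = x (i + p)

/-- The set {ε, 0, 00, 1, 11}. -/
def P5 : Set (List Bool) :=
  {[], [false], [false, false], [true], [true, true]}

/-- Thue–Morse word: parity of the number of ones in base 2. -/
def tmWord (n : ℕ) : Bool := (Nat.digits 2 n).sum % 2 == 1

/-- Lexicographic order (0 < 1) on infinite binary words. -/
def LexLE (u v : ℕ → Bool) : Prop :=
  u = v ∨ ∃ n, (∀ k < n, u k = v k) ∧ u n = false ∧ v n = true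

/-- The 2-kernel of an infinite word. -/
def Kernel2 (x : ℕ → Bool) : Set (ℕ → Bool) :=
  {y | ∃ i j, j < 2 ^ i ∧ y = fun n => x (2 ^ i * n + j)}

/-- An infinite word is 2-automatic iff its 2-kernel is finite. -/
def TwoAutomatic (x : ℕ → Bool) : Prop := (Kernel2 x).Finite


section Aux

/-- `x` has a `p`-periodic window of length `n` starting at `i`. -/
def RepW (x : ℕ → Bool) (i p n : ℕ) : Prop := ∀ k, k + p < n → x (i + k) = x (i + k + p)

/-- Repetition-freeness in arithmetic form. -/
def RepFree (x : ℕ → Bool) : Prop := ∀ i p n, 1 ≤ p → RepW x i p n → 3 * n < 7 * p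

lemma muI_even (y : ℕ → Bool) (t : ℕ) : muI y (2 * t) = y t := by
  have h1 : (2 * t) % 2 = 0 := by omega
  have h2 : (2 * t) / 2 = t := by omega
  simp [muI, h1, h2]

lemma muI_odd (y : ℕ → Bool) (t : ℕ) : muI y (2 * t + 1) = !(y t) := by
  have h1 : ¬((2 * t + 1) % 2 = 0) := by omega
  have h2 : (2 * t + 1) / 2 = t := by omega
  simp [muI, h1, h2]

lemma muI_pair (y : ℕ → Bool) (m : ℕ) (hm : m % 2 = 0) : muI y (m + 1) = !(muI y m) := by
  obtain ⟨t, rfl⟩ : ∃ t, m = 2 * t := ⟨m / 2, by omega⟩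
  rw [muI_even, muI_odd]

lemma appendInf_zero (b : Bool) (y : ℕ → Bool) : appendInf [b] y 0 = b := rfl

lemma appendInf_succ (b : Bool) (y : ℕ → Bool) (m : ℕ) : appendInf [b] y (m + 1) = y m := by
  simp [appendInf]

lemma rep_shift_in (y : ℕ → Bool) (b : Bool) (i p n : ℕ) (h : RepW y i p n) :
    RepW (appendInf [b] y) (i + 1) p n := by
  intro k hk
  have e1 : i + 1 + k = (i + k) + 1 := by omega
  have e2 : i + 1 + k + p = (i + k + p) + 1 := by omega
  rw [e2, e1, appendInf_succ, appendInf_succ]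
  exact h k hk

lemma rep_shift_out (y : ℕ → Bool) (b : Bool) (i p n : ℕ)
    (h : RepW (appendInf [b] y) (i + 1) p n) : RepW y i p n := by
  intro k hk
  have hh := h k hk
  have e1 : i + 1 + k = (i + k) + 1 := by omega
  have e2 : i + 1 + k + p = (i + k + p) + 1 := by omega
  rw [e2, e1, appendInf_succ, appendInf_succ] at hh
  exact hh

lemma rep_drop (y : ℕ → Bool) (b : Bool) (p n : ℕ)
    (h : RepW (appendInf [b] y) 0 p n) : RepW y 0 p (n - 1) := by
  intro k hk
  have hh := h (k + 1) (by omega)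
  simp only [Nat.zero_add] at hh ⊢
  have e : k + 1 + p = (k + p) + 1 := by omega
  rw [e, appendInf_succ, appendInf_succ] at hh
  exact hh

lemma rep_double (x : ℕ → Bool) (i p n : ℕ) (h : RepW x i p n) :
    RepW (muI x) (2 * i) (2 * p) (2 * n) := by
  intro k hk
  obtain ⟨s, hs | hs⟩ : ∃ s, k = 2 * s ∨ k = 2 * s + 1 := ⟨k / 2, by omega⟩
  · subst hs
    have e1 : 2 * i + 2 * s = 2 * (i + s) := by omega
    have e2 : 2 * i + 2 * s + 2 * p = 2 * (i + s + p) := by omega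
    rw [e2, e1, muI_even, muI_even]
    exact h s (by omega)
  · subst hs
    have e1 : 2 * i + (2 * s + 1) = 2 * (i + s) + 1 := by omega
    have e2 : 2 * i + (2 * s + 1) + 2 * p = 2 * (i + s + p) + 1 := by omega
    rw [e2, e1, muI_odd, muI_odd, h s (by omega)]

/-- No odd-period repetition of length ≥ 2p (+1 if the window starts at an odd
position) inside a μ-image. -/
lemma odd_case (v : ℕ → Bool) (i p n : ℕ) (hp : p % 2 = 1)
    (hn : 2 * p + i % 2 < n + 1) (hrep : RepW (muI v) i p n) : False := by
  set x := muI v with hx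
  have hrep' : ∀ a, i ≤ a → a + p < i + n → x a = x (a + p) := by
    intro a ha hb
    have h := hrep (a - i) (by omega)
    have e : i + (a - i) = a := by omega
    rw [e] at h
    exact h
  have pair : ∀ m, m % 2 = 0 → x (m + 1) = !(x m) := fun m hm => muI_pair v m hm
  set j0 := i + i % 2 with hj0
  have hj0e : j0 % 2 = 0 := by omega
  have claim : ∀ k, 2 * k + 1 ≤ p → x (j0 + 2 * k) = x j0 := by
    intro k
    induction k with
    | zero => intro _; rfl
    | succ k ih =>
      intro hk
      have ihv := ih (by omega)
      have h1 : x (j0 + 2 * k + 1) = !(x (j0 + 2 * k)) := pair _ (by omega)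
      have h2 : x (j0 + 2 * k + 1) = x (j0 + 2 * k + 1 + p) := hrep' _ (by omega) (by omega)
      have h3 : x (j0 + 2 * k + 1 + p + 1) = !(x (j0 + 2 * k + 1 + p)) := pair _ (by omega)
      have h4 : x (j0 + 2 * k + 2) = x (j0 + 2 * k + 2 + p) := hrep' _ (by omega) (by omega)
      have e : j0 + 2 * k + 2 + p = j0 + 2 * k + 1 + p + 1 := by omega
      have e2 : j0 + 2 * (k + 1) = j0 + 2 * k + 2 := by omega
      rw [e2, h4, e, h3, ← h2, h1, Bool.not_not, ihv]
  have hp1 : 1 ≤ p := by omega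
  have c1 : x (j0 + 2 * ((p - 1) / 2)) = x j0 := claim _ (by omega)
  have e1 : j0 + 2 * ((p - 1) / 2) = j0 + p - 1 := by omega
  have c2 : x (j0 + p - 1 + 1) = !(x (j0 + p - 1)) := pair _ (by omega)
  have e2 : j0 + p - 1 + 1 = j0 + p := by omega
  have c3 : x j0 = x (j0 + p) := hrep' j0 (by omega) (by omega)
  rw [e1] at c1
  rw [e2, c1] at c2
  rw [c2] at c3
  simp at c3

/-- Decoding an even-period repetition inside a μ-image. -/
lemma even_interior (v : ℕ → Bool) (i q n : ℕ) (hn : 2 * q + 1 ≤ n)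
    (hrep : RepW (muI v) i (2 * q) n) : RepW v (i / 2) q ((i + n + 1) / 2 - i / 2) := by
  intro k hk
  have hrep' : ∀ a, i ≤ a → a + 2 * q < i + n → muI v a = muI v (a + 2 * q) := by
    intro a ha hb
    have h := hrep (a - i) (by omega)
    have e : i + (a - i) = a := by omega
    rw [e] at h
    exact h
  by_cases hcase : 2 * (i / 2 + k + q) + 1 < i + n
  · have h := hrep' (2 * (i / 2 + k) + 1) (by omega) (by omega)
    have e : 2 * (i / 2 + k) + 1 + 2 * q = 2 * (i / 2 + k + q) + 1 := by omega
    rw [e, muI_odd, muI_odd] at h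
    simpa using h
  · have h := hrep' (2 * (i / 2 + k)) (by omega) (by omega)
    have e : 2 * (i / 2 + k) + 2 * q = 2 * (i / 2 + k + q) := by omega
    rw [e, muI_even, muI_even] at h
    exact h

/-- Decoding an even-period repetition at the boundary of `b · μ(v)`. -/
lemma even_boundary (v : ℕ → Bool) (b : Bool) (q n : ℕ) (hq : 1 ≤ q) (hn : 2 * q < n)
    (hrep : RepW (appendInf [b] (muI v)) 0 (2 * q) n) :
    RepW (appendInf [!b] v) 0 q (n / 2 + 1) := by
  intro k hk
  cases k with
  | zero =>
    have h := hrep 0 (by omega)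
    simp only [Nat.zero_add, Nat.add_zero] at h hk ⊢
    rw [appendInf_zero] at h
    have e1 : 2 * q = (2 * (q - 1) + 1) + 1 := by omega
    rw [e1, appendInf_succ, muI_odd] at h
    rw [appendInf_zero]
    have e3 : q = (q - 1) + 1 := by omega
    rw [e3, appendInf_succ]
    rw [h, Bool.not_not]
  | succ k =>
    have h := hrep (2 * k + 1) (by omega)
    simp only [Nat.zero_add] at h hk ⊢
    rw [appendInf_succ, muI_even] at h
    have e : 2 * k + 1 + 2 * q = (2 * (k + q)) + 1 := by omega
    rw [e, appendInf_succ, muI_even] at h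
    rw [appendInf_succ]
    have e2 : k + 1 + q = (k + q) + 1 := by omega
    rw [e2, appendInf_succ]
    exact h

lemma mu_repFree (v : ℕ → Bool) (hv : RepFree v) : RepFree (muI v) := by
  intro i p n hp hrep
  by_contra hc
  push_neg at hc
  rcases Nat.even_or_odd p with ⟨q, hq⟩ | hodd
  · have hq1 : 1 ≤ q := by omega
    have hrep' : RepW (muI v) i (2 * q) n := by
      rw [show 2 * q = p by omega]; exact hrep
    have h2 := even_interior v i q n (by omega) hrep'
    have := hv (i / 2) q ((i + n + 1) / 2 - i / 2) hq1 h2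
    omega
  · have hpo : p % 2 = 1 := Nat.odd_iff.mp hodd
    exact odd_case v i p n hpo (by omega) hrep

lemma free_iff_repFree (x : ℕ → Bool) : Free73 x ↔ RepFree x := by
  constructor
  · intro h i p n hp hrep
    by_contra hc
    push_neg at hc
    refine h ((List.range n).map fun k => x (i + k)) ⟨i, ?_⟩ ⟨p, hp, ?_, ?_⟩
    · intro k hk
      simp [List.get_eq_getElem]
    · intro j hj
      simp only [List.length_map, List.length_range] at hj
      rw [List.getD_eq_getElem _ _ (by simp; omega), List.getD_eq_getElem _ _ (by simp; omega)]
      simpa [Nat.add_assoc] using hrep j (by omega)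
    · have hlen : (((List.range n).map fun k => x (i + k)).length : ℚ) = n := by simp
      rw [hlen]
      have hcast : (7 : ℚ) * p ≤ 3 * n := by exact_mod_cast hc
      linarith
  · rintro h w ⟨i, hi⟩ ⟨p, hp1, hper, hlen⟩
    have hrep : RepW x i p w.length := by
      intro k hk
      have e1 := hper k hk
      rw [List.getD_eq_getElem _ _ (by omega), List.getD_eq_getElem _ _ (by omega)] at e1
      have g1 := hi k (by omega)
      have g2 := hi (k + p) (by omega)
      rw [List.get_eq_getElem] at g1 g2
      have e2 : i + (k + p) = i + k + p := by omega
      rw [e2] at g2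
      rw [← g1, ← g2]
      exact e1
    have hlt := h i p w.length hp1 hrep
    have hc : (7 : ℚ) * p ≤ 3 * w.length := by linarith
    have hc2 : 7 * p ≤ 3 * w.length := by exact_mod_cast hc
    omega

end Aux

theorem stmt9 (x : ℕ → Bool) :
    Free73 (appendInf [false] (muI (muI x))) ↔ Free73 x := by
  rw [free_iff_repFree, free_iff_repFree]
  constructor
  · intro h i p n hp hrep
    have h1 := rep_double x i p n hrep
    have h2 := rep_double (muI x) _ _ _ h1
    have h3 : RepW (appendInf [false] (muI (muI x))) (2 * (2 * i) + 1) (2 * (2 * p)) (2 * (2 * n)) :=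
      rep_shift_in _ _ _ _ _ h2
    have := h _ _ _ (by omega) h3
    omega
  · intro h i p n hp hrep
    by_contra hc
    push_neg at hc
    have hmm : RepFree (muI (muI x)) := mu_repFree _ (mu_repFree _ h)
    rcases i with _ | i
    · rcases Nat.even_or_odd p with ⟨q, hq⟩ | hodd
      · have hq1 : 1 ≤ q := by omega
        have hrepq : RepW (appendInf [false] (muI (muI x))) 0 (2 * q) n := by
          rw [show 2 * q = p by omega]; exact hrep
        have hb1 := even_boundary (muI x) false q n hq1 (by omega) hrepq
        rcases Nat.even_or_odd q with ⟨r, hr⟩ | hqodd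
        · have hr1 : 1 ≤ r := by omega
          have hb1' : RepW (appendInf [!false] (muI x)) 0 (2 * r) (n / 2 + 1) := by
            rw [show 2 * r = q by omega]; exact hb1
          have hb2 := even_boundary x (!false) r (n / 2 + 1) hr1 (by omega) hb1'
          have hx : RepW x 0 r ((n / 2 + 1) / 2 + 1 - 1) := rep_drop _ _ _ _ hb2
          have := h 0 r _ hr1 hx
          omega
        · have hmx : RepW (muI x) 0 q (n / 2 + 1 - 1) := rep_drop _ _ _ _ hb1
          exact odd_case x 0 q (n / 2 + 1 - 1) (Nat.odd_iff.mp hqodd) (by omega) hmx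
      · have hin : RepW (muI (muI x)) 0 p (n - 1) := rep_drop _ _ _ _ hrep
        exact odd_case (muI x) 0 p (n - 1) (Nat.odd_iff.mp hodd) (by omega) hin
    · have hsh := rep_shift_out _ _ _ _ _ hrep
      have := hmm i p n hp hsh
      omega
end

section
/- For every right-infinite binary word x, the word 010μ⁴(x) is 7/3-power-free if and only if 010μ³(x) is 7/3-power-free. -/
section Stmt14Aux

/-- Existence of a factor of exponent ≥ 7/3, phrased arithmetically. -/
def HasPowF (X : ℕ → Bool) : Prop :=
  ∃ i p L, 1 ≤ p ∧ 7 * p ≤ 3 * L ∧ ∀ j, j + p < L → X (i + j) = X (i + j + p)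

lemma muI_two_mul (X : ℕ → Bool) (n : ℕ) : muI X (2 * n) = X n := by
  unfold muI
  rw [if_pos (show 2 * n % 2 = 0 by omega), show 2 * n / 2 = n by omega]

lemma muI_two_mul_add_one (X : ℕ → Bool) (n : ℕ) : muI X (2 * n + 1) = !(X n) := by
  unfold muI
  rw [if_neg (show ¬ (2 * n + 1) % 2 = 0 by omega), show (2 * n + 1) / 2 = n by omega]

lemma muI_zero (X : ℕ → Bool) : muI X 0 = X 0 := by
  simpa using muI_two_mul X 0

lemma muI_one (X : ℕ → Bool) : muI X 1 = !(X 0) := by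
  simpa using muI_two_mul_add_one X 0

lemma pull (Y : ℕ → Bool) (q m : ℕ) (h : muI Y (2 * m) = muI Y (2 * m + 2 * q)) :
    Y m = Y (m + q) := by
  rw [muI_two_mul, show 2 * m + 2 * q = 2 * (m + q) by ring, muI_two_mul] at h
  exact h

lemma mu_pair (Y : ℕ → Bool) (j : ℕ) (h : muI Y j = muI Y (j + 1)) : j % 2 = 1 := by
  rcases Nat.even_or_odd j with ⟨m, hm⟩ | ⟨m, hm⟩
  · subst hm
    rw [show m + m = 2 * m by ring] at h
    rw [muI_two_mul, muI_two_mul_add_one] at h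
    cases hY : Y m <;> simp [hY] at h
  · omega

lemma app_zero (Z : ℕ → Bool) : appendInf [false, true, false] Z 0 = false := rfl
lemma app_one (Z : ℕ → Bool) : appendInf [false, true, false] Z 1 = true := rfl
lemma app_two (Z : ℕ → Bool) : appendInf [false, true, false] Z 2 = false := rfl

lemma app_three (Z : ℕ → Bool) (k : ℕ) :
    appendInf [false, true, false] Z (k + 3) = Z k := by
  unfold appendInf
  rw [dif_neg (show ¬ k + 3 < List.length [false, true, false] by simp)]
  simp

/-- Parity-based contradiction: a word whose equal adjacent pairs all sit at
positions of fixed parity `c` cannot have an odd period on a long enough range. -/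
lemma par_contra (V : ℕ → Bool) (i p L c : ℕ) (hp : p % 2 = 1) (hL : 2 * p + 1 ≤ L)
    (hper : ∀ a, i ≤ a → a + p < i + L → V a = V (a + p))
    (hpair : ∀ j, V j = V (j + 1) → j % 2 = c) : False := by
  by_cases hex : ∃ j, i ≤ j ∧ j + 1 + p < i + L ∧ V j = V (j + 1)
  · obtain ⟨j, hj1, hj2, hj3⟩ := hex
    have e1 : V (j + p) = V (j + p + 1) := by
      rw [← hper j hj1 (by omega), show j + p + 1 = j + 1 + p by ring,
        ← hper (j + 1) (by omega) hj2]
      exact hj3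
    have c1 := hpair j hj3
    have c2 := hpair (j + p) e1
    omega
  · push_neg at hex
    have halt : ∀ k, k ≤ p → V (i + k) = (if k % 2 = 0 then V i else !(V i)) := by
      intro k
      induction k with
      | zero => simp
      | succ n ih =>
        intro hn
        have hne := hex (i + n) (by omega) (by omega)
        have ihn := ih (by omega)
        have hstep : V (i + n + 1) = !(V (i + n)) := by
          cases h1 : V (i + n) <;> cases h2 : V (i + n + 1) <;>
            simp [h1, h2] <;> exact hne (h1.trans h2.symm)
        rw [show i + (n + 1) = i + n + 1 by ring, hstep, ihn]
        by_cases h2 : n % 2 = 0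
        · rw [if_pos h2, if_neg (by omega)]
        · rw [if_neg h2, if_pos (by omega), Bool.not_not]
    have h1 := hper i le_rfl (by omega)
    have h2 := halt p le_rfl
    rw [if_neg (by omega)] at h2
    have : V i = !(V i) := h1.trans h2
    cases h : V i <;> simp [h] at this

lemma hasPow_mu (X : ℕ → Bool) (h : HasPowF X) : HasPowF (muI X) := by
  obtain ⟨i, p, L, hp, hL, hper⟩ := h
  refine ⟨2 * i, 2 * p, 2 * L, by omega, by omega, ?_⟩
  intro j hj
  rcases Nat.even_or_odd j with ⟨m, hm⟩ | ⟨m, hm⟩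
  · have h1 : 2 * i + j = 2 * (i + m) := by omega
    have h2 : 2 * i + j + 2 * p = 2 * (i + m + p) := by omega
    rw [h2, h1, muI_two_mul, muI_two_mul]
    exact hper m (by omega)
  · have h1 : 2 * i + j = 2 * (i + m) + 1 := by omega
    have h2 : 2 * i + j + 2 * p = 2 * (i + m + p) + 1 := by omega
    rw [h2, h1, muI_two_mul_add_one, muI_two_mul_add_one, hper m (by omega)]

lemma hasPow_of_mu (X : ℕ → Bool) (h : HasPowF (muI X)) : HasPowF X := by
  obtain ⟨i, p, L, hp, hL, hper⟩ := h
  have habs : ∀ a, i ≤ a → a + p < i + L → muI X a = muI X (a + p) := by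
    intro a h1 h2
    have := hper (a - i) (by omega)
    rw [show i + (a - i) + p = a + p by omega, show i + (a - i) = a by omega] at this
    exact this
  rcases Nat.even_or_odd p with ⟨q, hq⟩ | hodd
  · -- p = 2q
    have hq' : p = 2 * q := by omega
    have hq1 : 1 ≤ q := by omega
    refine ⟨i / 2, q, (i + L - 1) / 2 - i / 2 + 1, hq1, by omega, ?_⟩
    intro j hj
    set m := i / 2 + j with hm
    have hm1 : i ≤ 2 * m + 1 := by omega
    have hm2 : 2 * m + 2 * q ≤ i + L - 1 := by omega
    show X m = X (m + q)
    by_cases he : i ≤ 2 * m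
    · apply pull
      have := habs (2 * m) he (by omega)
      rwa [show 2 * m + p = 2 * m + 2 * q by omega] at this
    · have := habs (2 * m + 1) (by omega) (by omega)
      rw [show 2 * m + 1 + p = 2 * (m + q) + 1 by omega, muI_two_mul_add_one,
        muI_two_mul_add_one] at this
      simpa using this
  · obtain ⟨m, hm⟩ := hodd
    exact absurd (par_contra (muI X) i p L 1 (by omega) (by omega) habs (mu_pair X)) id

lemma inject (Z : ℕ → Bool) (h : HasPowF Z) :
    HasPowF (appendInf [false, true, false] Z) := by
  obtain ⟨i, p, L, hp, hL, hper⟩ := h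
  refine ⟨i + 3, p, L, hp, hL, ?_⟩
  intro j hj
  rw [show i + 3 + j + p = (i + j + p) + 3 by ring, show i + 3 + j = (i + j) + 3 by ring,
    app_three, app_three]
  exact hper j hj

lemma w_pair (Y : ℕ → Bool) (j : ℕ)
    (h : appendInf [false, true, false] (muI Y) j
       = appendInf [false, true, false] (muI Y) (j + 1)) : j % 2 = 0 := by
  rcases j with _ | _ | _ | k
  · exact absurd h (by rw [app_zero, app_one]; simp)
  · exact absurd h (by rw [app_one, app_two]; simp)
  · rfl
  · rw [show k + 1 + 1 + 1 = k + 3 by ring, app_three,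
      show k + 3 + 1 = (k + 1) + 3 by ring, app_three] at h
    have := mu_pair Y k h
    omega

lemma fwd (φ : ℕ → Bool) (h : φ 0 = true) :
    HasPowF (appendInf [false, true, false] (muI (muI (muI φ)))) := by
  refine ⟨0, 2, 5, by norm_num, by norm_num, ?_⟩
  intro j hj
  have hj3 : j < 3 := by omega
  interval_cases j
  · rw [show (0:ℕ) + 0 = 0 by rfl, show (0:ℕ) + 0 + 2 = 2 by rfl, app_zero, app_two]
  · rw [show (0:ℕ) + 1 = 1 by rfl, show (0:ℕ) + 1 + 2 = 0 + 3 by rfl, app_one, app_three,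
      muI_zero, muI_zero, muI_zero, h]
  · rw [show (0:ℕ) + 2 = 2 by rfl, show (0:ℕ) + 2 + 2 = 1 + 3 by rfl, app_two, app_three,
      muI_one, muI_zero, muI_zero, h]
    rfl

lemma back (φ : ℕ → Bool) (i p L : ℕ) (hi : i ≤ 2) (hp : 1 ≤ p) (hL : 7 * p ≤ 3 * L)
    (hper : ∀ j, j + p < L →
      appendInf [false, true, false] (muI (muI (muI φ))) (i + j)
        = appendInf [false, true, false] (muI (muI (muI φ))) (i + j + p)) :
    HasPowF φ ∨ φ 0 = true := by
  have habs : ∀ a, i ≤ a → a + p < i + L →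
      appendInf [false, true, false] (muI (muI (muI φ))) a
        = appendInf [false, true, false] (muI (muI (muI φ))) (a + p) := by
    intro a h1 h2
    have := hper (a - i) (by omega)
    rwa [show i + (a - i) + p = a + p by omega, show i + (a - i) = a by omega] at this
  rcases Nat.even_or_odd p with ⟨q, hqe⟩ | hodd
  swap
  · obtain ⟨m, hm⟩ := hodd
    exact absurd (par_contra _ i p L 0 (by omega) (by omega) habs (w_pair (muI (muI φ)))) id
  have hq : p = 2 * q := by omega
  have hq1 : 1 ≤ q := by omega
  have Zper : ∀ k, k + 2 * q + 4 ≤ i + L →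
      muI (muI (muI φ)) k = muI (muI (muI φ)) (k + 2 * q) := by
    intro k hk
    have := habs (k + 3) (by omega) (by omega)
    rwa [show k + 3 + p = (k + 2 * q) + 3 by omega, app_three, app_three] at this
  have δper : ∀ m, 2 * m + 2 * q + 4 ≤ i + L → muI (muI φ) m = muI (muI φ) (m + q) := by
    intro m hm
    exact pull _ q m (Zper (2 * m) (by omega))
  have hδq : muI (muI φ) (q - 1) = true := by
    have := habs 2 (by omega) (by omega)
    rw [app_two, show 2 + p = (2 * (q - 1) + 1) + 3 by omega, app_three,
      muI_two_mul_add_one] at this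
    cases h : muI (muI φ) (q - 1) <;> simp [h] at this ⊢
  by_cases hq2 : q = 1
  · right
    have h0 : muI (muI φ) 0 = true := by rw [← hδq]; congr 1; omega
    rwa [muI_zero, muI_zero] at h0
  have hq2' : 2 ≤ q := by omega
  rcases Nat.even_or_odd q with ⟨r, hre⟩ | hqodd
  · -- q = 2r even
    have hr : q = 2 * r := by omega
    have hr1 : 1 ≤ r := by omega
    have hθr : muI φ (r - 1) = false := by
      rw [show q - 1 = 2 * (r - 1) + 1 by omega, muI_two_mul_add_one] at hδq
      cases h : muI φ (r - 1) <;> simp [h] at hδq ⊢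
    by_cases hi0 : i = 0
    · exfalso
      have h0 := habs 0 (by omega) (by omega)
      rw [app_zero, show 0 + p = (2 * (q - 2) + 1) + 3 by omega, app_three,
        muI_two_mul_add_one] at h0
      have hδq2 : muI (muI φ) (q - 2) = true := by
        cases h : muI (muI φ) (q - 2) <;> simp [h] at h0 ⊢
      rw [show q - 2 = 2 * (r - 1) by omega, muI_two_mul, hθr] at hδq2
      exact absurd hδq2 (by simp)
    have hi1 : 1 ≤ i := by omega
    have θper : ∀ n, 4 * n + 4 * r + 4 ≤ i + L → muI φ n = muI φ (n + r) := by
      intro n hn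
      apply pull _ r n
      have := δper (2 * n) (by omega)
      rwa [show 2 * n + q = 2 * n + 2 * r by omega] at this
    rcases (show r % 3 = 0 ∨ r % 3 = 1 ∨ r % 3 = 2 by omega) with h3 | h3 | h3
    · -- r ≡ 0 mod 3
      left
      apply hasPow_of_mu
      obtain ⟨s, hs⟩ : ∃ s, r = 3 * s := ⟨r / 3, by omega⟩
      have hs1 : 1 ≤ s := by omega
      exact ⟨0, r, 7 * s, by omega, by omega, fun j hj => by
        simpa using θper j (by omega)⟩
    · -- r ≡ 1 mod 3
      by_cases hr2 : r = 1
      · exfalso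
        have h01 := θper 0 (by omega)
        rw [show (0:ℕ) + r = 1 by omega, muI_zero, muI_one] at h01
        cases h : φ 0 <;> simp [h] at h01
      rcases Nat.even_or_odd r with ⟨t, hte⟩ | hrodd
      · -- r = 2t, t ≡ 2 mod 3
        have ht : r = 2 * t := by omega
        obtain ⟨u, hu⟩ : ∃ u, t = 3 * u + 2 := ⟨t / 3, by omega⟩
        have φper : ∀ w, 8 * w + 8 * t + 4 ≤ i + L → φ w = φ (w + t) := by
          intro w hw
          apply pull _ t w
          have := θper (2 * w) (by omega)
          rwa [show 2 * w + r = 2 * w + 2 * t by omega] at this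
        left
        exact ⟨0, t, 7 * u + 5, by omega, by omega, fun j hj => by
          simpa using φper j (by omega)⟩
      · -- r odd, r ≥ 7
        exfalso
        obtain ⟨v, hv⟩ := hrodd
        refine par_contra (muI φ) 0 r (2 * r + 1) 1 (by omega) le_rfl ?_ (mu_pair φ)
        intro a _ h2
        exact θper a (by omega)
    · -- r ≡ 2 mod 3
      left
      apply hasPow_of_mu
      obtain ⟨s, hs⟩ : ∃ s, r = 3 * s + 2 := ⟨r / 3, by omega⟩
      exact ⟨0, r, 7 * s + 5, by omega, by omega, fun j hj => by
        simpa using θper j (by omega)⟩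
  · -- q odd, q ≥ 3
    obtain ⟨v, hv⟩ := hqodd
    by_cases hq3 : q = 3
    · exfalso
      have d0 := δper 0 (by omega)
      have d1 := δper 1 (by omega)
      have d2 := δper 2 (by omega)
      rw [hq3] at d0 d1 d2
      have e2 : muI (muI φ) 2 = true := by rw [← hδq]; congr 1; omega
      rw [show (0:ℕ) + 3 = 2 * 1 + 1 by norm_num, muI_zero, muI_two_mul_add_one] at d0
      rw [show (1:ℕ) + 3 = 2 * 2 by norm_num, muI_one, muI_two_mul] at d1
      rw [show (2:ℕ) + 3 = 2 * 2 + 1 by norm_num, show (2:ℕ) = 2 * 1 by norm_num,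
        muI_two_mul, muI_two_mul_add_one] at d2
      rw [show (2:ℕ) = 2 * 1 by norm_num, muI_two_mul] at e2
      cases h0 : muI φ 0 <;> cases h1 : muI φ 1 <;> cases h2 : muI φ 2 <;> simp_all
    · -- q odd ≥ 5
      exfalso
      refine par_contra (muI (muI φ)) 0 q (2 * q + 1) 1 (by omega) le_rfl ?_ (mu_pair (muI φ))
      intro a _ h2
      exact δper a (by omega)

lemma main_aux (φ : ℕ → Bool) :
    HasPowF (appendInf [false, true, false] (muI (muI (muI φ)))) ↔ HasPowF φ ∨ φ 0 = true := by
  constructor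
  · rintro ⟨i, p, L, hp, hL, hper⟩
    by_cases hi : i ≤ 2
    · exact back φ i p L hi hp hL hper
    · left
      have hint : HasPowF (muI (muI (muI φ))) := by
        refine ⟨i - 3, p, L, hp, hL, ?_⟩
        intro j hj
        have := hper j hj
        rwa [show i + j + p = (i - 3 + j + p) + 3 by omega,
          show i + j = (i - 3 + j) + 3 by omega, app_three, app_three] at this
      exact hasPow_of_mu _ (hasPow_of_mu _ (hasPow_of_mu _ hint))
  · rintro (h | h)
    · exact inject _ (hasPow_mu _ (hasPow_mu _ (hasPow_mu _ h)))
    · exact fwd φ h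

lemma free_iff (X : ℕ → Bool) : Free73 X ↔ ¬ HasPowF X := by
  constructor
  · rintro hF ⟨i, p, L, hp, hL, hper⟩
    set w : List Bool := (List.range L).map (fun k => X (i + k)) with hw
    have hlen : w.length = L := by simp [hw]
    have hget : ∀ k (hk : k < w.length), w.get ⟨k, hk⟩ = X (i + k) := by
      intro k hk
      simp [hw]
    have hgd : ∀ m, m < w.length → w.getD m false = X (i + m) := by
      intro m hm
      rw [List.getD_eq_getElem _ _ hm]
      simp [hw]
    refine hF w ⟨i, hget⟩ ⟨p, hp, ?_, ?_⟩
    · intro k hk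
      rw [hgd k (by omega), hgd (k + p) (by omega), ← Nat.add_assoc]
      exact hper k (by omega)
    · rw [hlen]
      rw [div_mul_eq_mul_div, div_le_iff₀ (by norm_num : (0:ℚ) < 3)]
      exact_mod_cast (by omega : 7 * p ≤ L * 3)
  · rintro hnp w ⟨i, hfac⟩ ⟨p, hp, hperiod, hlen⟩
    refine hnp ⟨i, p, w.length, hp, ?_, ?_⟩
    · have : (7 : ℚ) * p ≤ 3 * w.length := by
        rw [div_mul_eq_mul_div] at hlen
        have := (div_le_iff₀ (by norm_num : (0:ℚ) < 3)).mp hlen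
        linarith
      exact_mod_cast this
    · intro j hj
      have e1 := hfac j (by omega)
      have e2 := hfac (j + p) hj
      rw [← e1, show i + j + p = i + (j + p) by ring, ← e2]
      have := hperiod j hj
      rw [List.getD_eq_getElem _ _ (by omega), List.getD_eq_getElem _ _ (by omega)] at this
      simpa [List.get_eq_getElem] using this

end Stmt14Aux

theorem stmt14 (x : ℕ → Bool) :
    Free73 (appendInf [false, true, false] (muI (muI (muI (muI x))))) ↔
    Free73 (appendInf [false, true, false] (muI (muI (muI x)))) := by
  rw [free_iff, free_iff]
  have h4 := main_aux (muI x)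
  have h3 := main_aux x
  have hmu : HasPowF (muI x) ↔ HasPowF x := ⟨hasPow_of_mu x, hasPow_mu x⟩
  rw [h4, h3, hmu, muI_zero]
end
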